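/- arXiv:0904.0492 — 3 statements merged into one kernel-verified Lean document; each statement's English description precedes it below -/
import Mathlib

section
/- Let n ≥ 2, let 1 ≤ k ≤ n be an integer, and let μ ∈ ℝ^{n−1} have all entries positive. Then S_{k-1}^{n-1}(μ)² − S_k^{n-1}(μ) · S_{k-2}^{n-1}(μ) ≥ (n/(k(n−k+1))) · S_{k-1}^{n-1}(μ)². -/
/-! Writing `j = k - 1` and `m = n - 1`, the claim is a rearrangement of Newton's inequality
`(j + 1)(m - j + 1) S_{j+1} S_{j-1} ≤ j (m - j) S_j²`, proved for positive variables by induction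
on their number. Adjoining a variable `a` replaces each `S_i` by `S_i + a S_{i-1}`, so the new
inequality compares two quadratics in `a`. The two inductive hypotheses (at `j` and `j - 1`) give
slack in the constant and leading coefficients, their product bounds the loss in the middle
coefficient, and the total slack is a perfect square in `a`. -/

/-- The elementary symmetric polynomial `S_k^m(λ)`, with the convention that
it vanishes for `k < 0` or `k > m` (the latter automatic) and `S_0^m = 1`. -/
noncomputable def esymmS (m : ℕ) (k : ℤ) (lam : Fin m → ℝ) : ℝ :=
  if k < 0 then 0 else
    ∑ t ∈ Finset.univ.powersetCard k.toNat, ∏ i ∈ t, lam i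

namespace Multiset

variable {R : Type*}

@[simp]
theorem esymm_zero [CommSemiring R] (s : Multiset R) : s.esymm 0 = 1 := by
  simp [esymm]

theorem esymm_cons_succ [CommSemiring R] (a : R) (s : Multiset R) (n : ℕ) :
    (a ::ₘ s).esymm (n + 1) = s.esymm (n + 1) + a * s.esymm n := by
  simp [esymm, map_map, prod_cons, sum_map_mul_left]

theorem esymm_eq_zero_of_card_lt [CommSemiring R] {s : Multiset R} {n : ℕ} (h : card s < n) :
    s.esymm n = 0 := by
  simp [esymm, powersetCard_eq_empty n h]

theorem esymm_nonneg [CommSemiring R] [PartialOrder R] [IsOrderedRing R] {s : Multiset R}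
    (hs : ∀ x ∈ s, 0 ≤ x) (n : ℕ) : 0 ≤ s.esymm n :=
  sum_nonneg fun _ hp ↦ by
    obtain ⟨t, ht, rfl⟩ := mem_map.1 hp
    exact prod_nonneg fun x hx ↦ hs x (mem_of_le (mem_powersetCard.1 ht).1 hx)

theorem esymm_pos [CommSemiring R] [PartialOrder R] [IsStrictOrderedRing R] {s : Multiset R}
    (hs : ∀ x ∈ s, 0 < x) {n : ℕ} (hn : n ≤ card s) : 0 < s.esymm n := by
  induction s using Multiset.induction_on generalizing n with
  | empty => simp_all
  | cons a s ih =>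
    rcases n with _ | n
    · simp
    have hs' : ∀ x ∈ s, 0 < x := fun x hx ↦ hs x (mem_cons_of_mem hx)
    rw [esymm_cons_succ]
    exact add_pos_of_nonneg_of_pos (esymm_nonneg (fun x hx ↦ (hs' x hx).le) _)
      (mul_pos (hs a (mem_cons_self a s)) (ih hs' (by simpa using hn)))

end Multiset

theorem newton_inequality_step {p q a e₀ e₁ e₂ e₃ : ℝ} (hp : 1 ≤ p) (hq : 1 ≤ q) (ha : 0 ≤ a)
    (he₁ : 0 < e₁) (he₂ : 0 < e₂) (he₃ : 0 ≤ e₃)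
    (h₁ : p * (q + 1) * (e₂ * e₀) ≤ (p - 1) * q * e₁ ^ 2)
    (h₂ : (p + 1) * q * (e₃ * e₁) ≤ p * (q - 1) * e₂ ^ 2) :
    (p + 1) * (q + 1) * ((e₃ + a * e₂) * (e₁ + a * e₀)) ≤ p * q * (e₂ + a * e₁) ^ 2 := by
  have hpq : 0 < p * q := by positivity
  have cross : (p + 1) * (q + 1) * (e₃ * e₀) ≤ (p - 1) * (q - 1) * (e₂ * e₁) := by
    refine le_of_mul_le_mul_left ?_ (mul_pos hpq (mul_pos he₁ he₂))
    have := mul_le_mul h₁ h₂ (by positivity)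
      (mul_nonneg (mul_nonneg (by linarith) (by linarith)) (sq_nonneg e₁))
    linear_combination this
  have constant : p * e₂ ^ 2 ≤ q * (p * q * e₂ ^ 2 - (p + 1) * (q + 1) * (e₃ * e₁)) := by
    linear_combination (q + 1) * h₂
  have leading : q * e₁ ^ 2 ≤ p * (p * q * e₁ ^ 2 - (p + 1) * (q + 1) * (e₂ * e₀)) := by
    linear_combination (p + 1) * h₁
  refine le_of_mul_le_mul_left ?_ hpq
  linear_combination p * constant + q * a ^ 2 * leading + p * q * a * cross +
    sq_nonneg (p * e₂ - q * a * e₁)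

theorem Multiset.esymm_newton_inequality {s : Multiset ℝ} (hs : ∀ x ∈ s, 0 < x) {j : ℕ}
    (hj : j + 1 ≤ card s) :
    ((j : ℝ) + 2) * (card s - j) * (s.esymm (j + 2) * s.esymm j) ≤
      ((j : ℝ) + 1) * (card s - j - 1) * s.esymm (j + 1) ^ 2 := by
  induction s using Multiset.induction_on generalizing j with
  | empty => simp at hj
  | cons a s ih =>
    have hs' : ∀ x ∈ s, 0 < x := fun x hx ↦ hs x (mem_cons_of_mem hx)
    rw [card_cons] at hj ⊢
    rcases Nat.lt_or_eq_of_le (Nat.le_of_succ_le_succ hj) with hj | rfl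
    · -- `e₀` stands for `S_{j-1}`, which is `0` when `j = 0`.
      obtain ⟨e₀, he₀, h₁⟩ : ∃ e₀, (a ::ₘ s).esymm j = s.esymm j + a * e₀ ∧
          ((j : ℝ) + 1) * (card s - j + 1) * (s.esymm (j + 1) * e₀) ≤
            j * (card s - j) * s.esymm j ^ 2 := by
        rcases j with _ | i
        · exact ⟨0, by simp, by simp⟩
        · refine ⟨s.esymm i, esymm_cons_succ a s i, ?_⟩
          have := ih hs' (j := i) (by omega)
          push_cast at this ⊢
          linear_combination this
      have h₂ := ih hs' hj
      have hq : (1 : ℝ) ≤ card s - j := by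
        have : ((j + 1 : ℕ) : ℝ) ≤ card s := by exact_mod_cast hj
        push_cast at this
        linarith
      have key := newton_inequality_step (p := j + 1) (q := card s - j) (e₀ := e₀)
        (e₁ := s.esymm j) (e₂ := s.esymm (j + 1)) (e₃ := s.esymm (j + 2)) (by linarith) hq
        (hs a (mem_cons_self a s)).le (esymm_pos hs' hj.le) (esymm_pos hs' hj)
        (esymm_nonneg (fun x hx ↦ (hs' x hx).le) _)
        (by linear_combination h₁) (by linear_combination h₂)
      rw [he₀, esymm_cons_succ, esymm_cons_succ]
      push_cast
      linear_combination key
    · rw [esymm_eq_zero_of_card_lt (by simp)]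
      simp

theorem esymmS_natCast (m j : ℕ) (μ : Fin m → ℝ) :
    esymmS m j μ = (Finset.univ.val.map μ).esymm j := by
  rw [esymmS, if_neg (by omega), Int.toNat_natCast, Finset.esymm_map_val]

theorem esymmS_newton_inequality {m k : ℕ} (hk : 1 ≤ k) (hkm : k ≤ m + 1) {μ : Fin m → ℝ}
    (hμ : ∀ i, 0 < μ i) :
    (k : ℝ) * (m - k + 2) * (esymmS m k μ * esymmS m (k - 2) μ) ≤
      (k - 1) * (m - k + 1) * esymmS m (k - 1) μ ^ 2 := by
  rcases k with _ | _ | j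
  · omega
  · simp [esymmS]
  have hs : ∀ x ∈ Finset.univ.val.map μ, 0 < x := by simpa using hμ
  have h := Multiset.esymm_newton_inequality hs (j := j) (by simpa using hkm)
  simp only [Multiset.card_map, Finset.card_val, Finset.card_univ, Fintype.card_fin] at h
  rw [show ((j + 2 : ℕ) : ℤ) - 2 = (j : ℕ) by omega,
    show ((j + 2 : ℕ) : ℤ) - 1 = (j + 1 : ℕ) by omega,
    esymmS_natCast, esymmS_natCast, esymmS_natCast]
  push_cast
  linear_combination h

theorem newton_type_inequality_general (n k : ℕ) (hk1 : 1 ≤ k) (hkn : k ≤ n)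
    (μ : Fin (n - 1) → ℝ) (hpos : ∀ i, 0 < μ i) :
    (n : ℝ) / ((k : ℝ) * ((n : ℝ) - (k : ℝ) + 1)) * (esymmS (n - 1) ((k : ℤ) - 1) μ) ^ 2 ≤
      (esymmS (n - 1) ((k : ℤ) - 1) μ) ^ 2 -
        esymmS (n - 1) (k : ℤ) μ * esymmS (n - 1) ((k : ℤ) - 2) μ := by
  have h := esymmS_newton_inequality hk1 (by omega) hpos
  rw [Nat.cast_pred (by omega)] at h
  have hk : (1 : ℝ) ≤ k := by exact_mod_cast hk1
  have hkn' : (k : ℝ) ≤ n := by exact_mod_cast hkn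
  rw [div_mul_eq_mul_div, div_le_iff₀ (mul_pos (by linarith) (by linarith))]
  linear_combination h

/-- Newton-type inequality with explicit constant:
`S_{k-1}² − S_k S_{k-2} ≥ (n/(k(n−k+1))) S_{k-1}²` on `ℝ^{n-1}` with positive entries. -/
theorem newton_type_inequality (n k : ℕ) (hn : 2 ≤ n) (hk1 : 1 ≤ k) (hkn : k ≤ n)
    (μ : Fin (n - 1) → ℝ) (hpos : ∀ i, 0 < μ i) :
    (n : ℝ) / ((k : ℝ) * ((n : ℝ) - (k : ℝ) + 1)) * (esymmS (n - 1) ((k : ℤ) - 1) μ) ^ 2 ≤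
      (esymmS (n - 1) ((k : ℤ) - 1) μ) ^ 2 -
        esymmS (n - 1) (k : ℤ) μ * esymmS (n - 1) ((k : ℤ) - 2) μ :=
  newton_type_inequality_general n k hk1 hkn μ hpos
end

section
/- Let n ≥ 1 and fix c, d ∈ ℝ^n; let d_(1) ≤ ⋯ ≤ d_(n) denote the entries of d arranged in increasing order. For a ∈ ℝ, let μ_1(a) ≤ ⋯ ≤ μ_{n+1}(a) denote the eigenvalues of the symmetric arrowhead matrix B(a, c, d), listed with multiplicity. Then, as a → +∞, μ_i(a) → d_(i) for each 1 ≤ i ≤ n, and μ_{n+1}(a) − a → 0. -/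
/-!
Write `B = B(a, c, d)`. Restricted to the coordinate subspace spanned by the `e_{j+1}` with
`d_j ≤ t`, the quadratic form of `B` is at most `t`, so by the min-max principle `B` has at least
`#{j | d_j ≤ t}` eigenvalues `≤ t`; this gives the interlacing `μ_i(a) ≤ d_(i)` for `i ≤ n`.
On the other hand, the AM-GM inequality `2 x₀ cᵢ yᵢ ≤ cᵢ² x₀² / s + s yᵢ²` with `s = a - max d`
bounds the quadratic form of `B` by `a + ∑ cᵢ² / s`, hence `μ_{n+1}(a) - a ≤ ∑ cᵢ² / s → 0`.
Finally the trace identity `∑ μ_i(a) = a + ∑ d_i` says that the nonnegative gaps `d_(i) - μ_i(a)`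
add up to `μ_{n+1}(a) - a`, so each of them tends to `0` as well.
-/

open Filter Polynomial

/-- The symmetric arrowhead matrix `B(a, c, d)`: `B_{00} = a`,
`B_{0i} = B_{i0} = c_i`, `B_{ii} = d_i`, and `B_{ij} = 0` for distinct `i, j ≥ 1`. -/
noncomputable def arrowhead (n : ℕ) (a : ℝ) (c d : Fin n → ℝ) :
    Matrix (Fin (n + 1)) (Fin (n + 1)) ℝ :=
  Matrix.of fun i j =>
    Fin.cases (motive := fun _ => ℝ)
      (Fin.cases (motive := fun _ => ℝ) a (fun j' => c j') j)
      (fun i' => Fin.cases (motive := fun _ => ℝ) (c i')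
        (fun j' => if i' = j' then d i' else 0) j) i

open Finset Matrix Module

lemma Polynomial.roots_fintype_prod_X_sub_C {R ι : Type*} [CommRing R] [IsDomain R] [Fintype ι]
    (μ : ι → R) : (∏ i, (X - C (μ i))).roots = univ.val.map μ := by
  simpa [Multiset.map_map] using roots_multiset_prod_X_sub_C (univ.val.map μ)

lemma Polynomial.card_filter_eq_of_prod_X_sub_C_eq {R ι κ : Type*} [CommRing R] [IsDomain R]
    [Fintype ι] [Fintype κ] {μ : ι → R} {ν : κ → R}
    (h : ∏ i, (X - C (μ i)) = ∏ j, (X - C (ν j))) (p : R → Prop) [DecidablePred p] :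
    #{i | p (μ i)} = #{j | p (ν j)} := by
  have := congrArg (fun q : R[X] => q.roots.countP p) h
  simp only [roots_fintype_prod_X_sub_C, Multiset.countP_map] at this
  exact this

lemma Matrix.trace_eq_sum_of_charpoly_eq_prod {R ι : Type*} [CommRing R] [Fintype ι]
    [DecidableEq ι] {A : Matrix ι ι R} {μ : ι → R} (h : A.charpoly = ∏ i, (X - C (μ i))) :
    A.trace = ∑ i, μ i := by
  rw [trace_eq_neg_charpoly_nextCoeff, h, prod_X_sub_C_nextCoeff, neg_neg]

lemma Monotone.le_of_lt_card_filter_le {α : Type*} [LinearOrder α] {m : ℕ} {f : Fin m → α}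
    (hf : Monotone f) {k : Fin m} {t : α} (hk : (k : ℕ) < #{i | f i ≤ t}) : f k ≤ t := by
  by_contra! h
  have hsub : ({i | f i ≤ t} : Finset (Fin m)) ⊆ Iio k := fun i hi => by
    rw [mem_filter] at hi
    exact mem_Iio.2 (lt_of_not_ge fun hki => (h.trans_le (hf hki)).not_ge hi.2)
  have := card_le_card hsub
  rw [Fin.card_Iio] at this
  omega

namespace Matrix.IsHermitian

variable {ι : Type*} [Fintype ι] [DecidableEq ι] {A : Matrix ι ι ℝ}

lemma dotProduct_mulVec_eq_sum_eigenvalues (hA : A.IsHermitian) (x : ι → ℝ) :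
    x ⬝ᵥ A *ᵥ x =
      ∑ i, hA.eigenvalues i * ((hA.eigenvectorUnitary : Matrix ι ι ℝ)ᵀ *ᵥ x) i ^ 2 := by
  conv_lhs => rw [hA.spectral_theorem, Unitary.conjStarAlgAut_apply]
  rw [← mulVec_mulVec, ← mulVec_mulVec, dotProduct_mulVec, ← mulVec_transpose,
    star_eq_conjTranspose, conjTranspose_eq_transpose_of_trivial]
  simp only [dotProduct, RCLike.ofReal_real_eq_id, CompTriple.comp_eq, mulVec_diagonal, sq]
  exact sum_congr rfl fun i _ => by ring

lemma dotProduct_self_eq_sum_sq (hA : A.IsHermitian) (x : ι → ℝ) :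
    x ⬝ᵥ x = ∑ i, ((hA.eigenvectorUnitary : Matrix ι ι ℝ)ᵀ *ᵥ x) i ^ 2 := by
  have hU := Unitary.coe_mul_star_self hA.eigenvectorUnitary
  rw [Unitary.coe_star, star_eq_conjTranspose, conjTranspose_eq_transpose_of_trivial] at hU
  simp only [sq, ← dotProduct.eq_1]
  rw [dotProduct_mulVec, vecMul_transpose, mulVec_mulVec, hU, one_mulVec]

/-- The easy half of the Courant–Fischer min-max principle. -/
theorem finrank_le_card_eigenvalues_le (hA : A.IsHermitian) {t : ℝ} (W : Submodule ℝ (ι → ℝ))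
    (hW : ∀ x ∈ W, x ⬝ᵥ A *ᵥ x ≤ t * (x ⬝ᵥ x)) :
    finrank ℝ W ≤ #{i | hA.eigenvalues i ≤ t} := by
  set V : Matrix ι ι ℝ := (hA.eigenvectorUnitary : Matrix ι ι ℝ)ᵀ
  -- the eigen-coordinates of `x ∈ W` along eigenvalues `≤ t` determine `x`
  let Φ : W →ₗ[ℝ] ({i // hA.eigenvalues i ≤ t} → ℝ) :=
    LinearMap.funLeft ℝ ℝ Subtype.val ∘ₗ V.mulVecLin ∘ₗ W.subtype
  have hΦ : Function.Injective Φ := by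
    rw [← LinearMap.ker_eq_bot, LinearMap.ker_eq_bot']
    intro x hx
    have hlow : ∀ i, hA.eigenvalues i ≤ t → (V *ᵥ x) i = 0 := fun i hi => congrFun hx ⟨i, hi⟩
    have hterm : ∀ i, 0 ≤ (hA.eigenvalues i - t) * (V *ᵥ x) i ^ 2 := fun i => by
      rcases le_or_gt (hA.eigenvalues i) t with hi | hi
      · simp [hlow i hi]
      · exact mul_nonneg (sub_nonneg.2 hi.le) (sq_nonneg _)
    have hsum : ∑ i, (hA.eigenvalues i - t) * (V *ᵥ x) i ^ 2 ≤ 0 := by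
      have := hW x x.2
      rw [hA.dotProduct_mulVec_eq_sum_eigenvalues, hA.dotProduct_self_eq_sum_sq, mul_sum] at this
      simpa [sub_mul] using this
    have hsq : ∀ i, (V *ᵥ x) i ^ 2 = 0 := fun i => by
      have := (sum_eq_zero_iff_of_nonneg fun i _ => hterm i).1
        (le_antisymm hsum (sum_nonneg fun i _ => hterm i)) i (mem_univ i)
      rcases le_or_gt (hA.eigenvalues i) t with hi | hi
      · simp [hlow i hi]
      · exact (mul_eq_zero.1 this).resolve_left (sub_ne_zero.2 hi.ne')
    have : (x : ι → ℝ) ⬝ᵥ x = 0 := by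
      rw [hA.dotProduct_self_eq_sum_sq]
      exact sum_eq_zero fun i _ => hsq i
    exact Subtype.ext (dotProduct_self_eq_zero.1 this)
  calc finrank ℝ W ≤ finrank ℝ ({i // hA.eigenvalues i ≤ t} → ℝ) :=
        LinearMap.finrank_le_finrank_of_injective hΦ
    _ = #{i | hA.eigenvalues i ≤ t} := by
        rw [Module.finrank_fintype_fun_eq_card, Fintype.card_subtype]

theorem finrank_le_card_le_of_charpoly_eq (hA : A.IsHermitian) {μ : ι → ℝ}
    (hμ : A.charpoly = ∏ i, (X - C (μ i))) {t : ℝ} (W : Submodule ℝ (ι → ℝ))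
    (hW : ∀ x ∈ W, x ⬝ᵥ A *ᵥ x ≤ t * (x ⬝ᵥ x)) :
    finrank ℝ W ≤ #{i | μ i ≤ t} := by
  rw [card_filter_eq_of_prod_X_sub_C_eq (hμ.symm.trans hA.charpoly_eq) (· ≤ t)]
  exact hA.finrank_le_card_eigenvalues_le W hW

end Matrix.IsHermitian

section Arrowhead

variable {n : ℕ} {a : ℝ} {c d : Fin n → ℝ}

lemma arrowhead_isHermitian : (arrowhead n a c d).IsHermitian := by
  ext i j
  cases i using Fin.cases <;> cases j using Fin.cases <;> simp only [arrowhead,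
    conjTranspose_apply, of_apply, Fin.cases_zero, Fin.cases_succ, star_trivial]
  split_ifs <;> simp_all

lemma trace_arrowhead : (arrowhead n a c d).trace = a + ∑ i, d i := by
  simp [trace, Fin.sum_univ_succ, arrowhead]

lemma arrowhead_mulVec_zero (x : Fin (n + 1) → ℝ) :
    (arrowhead n a c d *ᵥ x) 0 = a * x 0 + ∑ i, c i * x i.succ := by
  simp [mulVec, dotProduct, Fin.sum_univ_succ, arrowhead]

lemma arrowhead_mulVec_succ (x : Fin (n + 1) → ℝ) (i : Fin n) :
    (arrowhead n a c d *ᵥ x) i.succ = c i * x 0 + d i * x i.succ := by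
  simp [mulVec, dotProduct, Fin.sum_univ_succ, arrowhead]

lemma dotProduct_arrowhead_mulVec (x : Fin (n + 1) → ℝ) :
    x ⬝ᵥ arrowhead n a c d *ᵥ x =
      a * x 0 ^ 2 + 2 * x 0 * ∑ i, c i * x i.succ + ∑ i, d i * x i.succ ^ 2 := by
  have hsucc : ∑ i : Fin n, x i.succ * (arrowhead n a c d *ᵥ x) i.succ =
      x 0 * ∑ i, c i * x i.succ + ∑ i, d i * x i.succ ^ 2 := by
    rw [mul_sum, ← sum_add_distrib]
    exact sum_congr rfl fun i _ => by rw [arrowhead_mulVec_succ]; ring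
  rw [dotProduct, Fin.sum_univ_succ, hsucc, arrowhead_mulVec_zero]
  ring

lemma dotProduct_self_fin_succ (x : Fin (n + 1) → ℝ) :
    x ⬝ᵥ x = x 0 ^ 2 + ∑ i : Fin n, x i.succ ^ 2 := by
  simp [dotProduct, Fin.sum_univ_succ, sq]

variable {μ : Fin (n + 1) → ℝ}

/-- Cauchy interlacing against the diagonal block `diag d`. -/
theorem card_filter_le_le_of_charpoly_arrowhead
    (hμ : (arrowhead n a c d).charpoly = ∏ i, (X - C (μ i))) (t : ℝ) :
    #{j | d j ≤ t} ≤ #{i | μ i ≤ t} := by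
  let e : {j // d j ≤ t} → Fin (n + 1) → ℝ := fun j => Pi.basisFun ℝ (Fin (n + 1)) j.1.succ
  have he : LinearIndependent ℝ e := (Pi.basisFun ℝ (Fin (n + 1))).linearIndependent.comp _
    ((Fin.succ_injective n).comp Subtype.val_injective)
  have := arrowhead_isHermitian.finrank_le_card_le_of_charpoly_eq hμ (t := t)
    (Submodule.span ℝ (Set.range e)) ?_
  · rwa [finrank_span_eq_card he, Fintype.card_subtype] at this
  intro x hx
  obtain ⟨y, rfl⟩ := (Submodule.mem_span_range_iff_exists_fun ℝ).1 hx
  set x := ∑ j, y j • e j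
  have hx0 : x 0 = 0 := by simp [x, e, Fin.succ_ne_zero]
  have hxd : ∀ i, d i * x i.succ ^ 2 ≤ t * x i.succ ^ 2 := fun i => by
    rcases le_or_gt (d i) t with hi | hi
    · exact mul_le_mul_of_nonneg_right hi (sq_nonneg _)
    · have : x i.succ = 0 := by
        simp only [x, e, Finset.sum_apply, Pi.smul_apply, Pi.basisFun_apply, Pi.single_apply,
          Fin.succ_inj]
        exact sum_eq_zero fun j _ => by
          simpa using fun hij : i = j => absurd (hij ▸ j.2) hi.not_ge
      simp [this]
  rw [dotProduct_arrowhead_mulVec, dotProduct_self_fin_succ, hx0]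
  simpa [mul_sum] using sum_le_sum fun i (_ : i ∈ univ) => hxd i

theorem le_add_div_of_charpoly_arrowhead
    (hμ : (arrowhead n a c d).charpoly = ∏ i, (X - C (μ i))) {D : ℝ} (hD : ∀ i, d i ≤ D)
    (hDa : D < a) (i : Fin (n + 1)) : μ i ≤ a + (∑ j, c j ^ 2) / (a - D) := by
  set s := a - D
  have hs : 0 < s := sub_pos.2 hDa
  have := arrowhead_isHermitian.finrank_le_card_le_of_charpoly_eq hμ (t := a + (∑ j, c j ^ 2) / s)
    ⊤ ?_
  · rw [finrank_top, finrank_fin_fun] at this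
    have hcard := le_antisymm (card_le_univ _) (by rwa [Fintype.card_fin])
    exact filter_eq_self.1 (eq_univ_of_card _ hcard) i (mem_univ i)
  intro x _
  have hamgm : ∀ j, 2 * x 0 * (c j * x j.succ) ≤ c j ^ 2 / s * x 0 ^ 2 + s * x j.succ ^ 2 :=
    fun j => by
      rw [div_mul_eq_mul_div, div_add' _ _ _ hs.ne', le_div_iff₀ hs]
      nlinarith [sq_nonneg (c j * x 0 - s * x j.succ)]
  have hcross := sum_le_sum fun j (_ : j ∈ univ) => hamgm j
  have hdiag := sum_le_sum fun j (_ : j ∈ univ) =>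
    mul_le_mul_of_nonneg_right (hD j) (sq_nonneg (x j.succ))
  rw [← mul_sum, sum_add_distrib, ← sum_mul, ← sum_div, ← mul_sum] at hcross
  rw [← mul_sum] at hdiag
  have : 0 ≤ (∑ j, c j ^ 2) / s * ∑ j : Fin n, x j.succ ^ 2 := by positivity
  rw [dotProduct_arrowhead_mulVec, dotProduct_self_fin_succ]
  nlinarith

theorem castSucc_le_of_charpoly_arrowhead
    (hμ : (arrowhead n a c d).charpoly = ∏ i, (X - C (μ i))) (hμ_mono : Monotone μ)
    {σ : Equiv.Perm (Fin n)} (hσ : Monotone (d ∘ σ)) (k : Fin n) : μ k.castSucc ≤ d (σ k) :=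
  hμ_mono.le_of_lt_card_filter_le <| calc
    (k.castSucc : ℕ) < #{j | d (σ j) ≤ d (σ k)} := by
      rw [Fin.val_castSucc, Nat.lt_iff_add_one_le, ← Fin.card_Iic]
      exact card_le_card fun j hj => mem_filter.2 ⟨mem_univ j, hσ (mem_Iic.1 hj)⟩
    _ = #{j | d j ≤ d (σ k)} := card_equiv σ (by simp)
    _ ≤ _ := card_filter_le_le_of_charpoly_arrowhead hμ _

theorem sum_sub_castSucc_eq_of_charpoly_arrowhead
    (hμ : (arrowhead n a c d).charpoly = ∏ i, (X - C (μ i))) (σ : Equiv.Perm (Fin n)) :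
    ∑ k, (d (σ k) - μ k.castSucc) = μ (Fin.last n) - a := by
  have := (trace_eq_sum_of_charpoly_eq_prod hμ).symm.trans trace_arrowhead
  rw [Fin.sum_univ_castSucc] at this
  rw [sum_sub_distrib, Equiv.sum_comp σ d]
  linarith

end Arrowhead

theorem arrowhead_eigenvalues_asymptotics_general (n : ℕ) (c d : Fin n → ℝ)
    (ds : Fin n → ℝ) (hds_mono : Monotone ds)
    (hds_perm : ∃ σ : Equiv.Perm (Fin n), ds = d ∘ σ)
    (μ : ℝ → Fin (n + 1) → ℝ) (hμ_mono : ∀ a, Monotone (μ a))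
    (hμ_eig : ∀ a, (arrowhead n a c d).charpoly =
      ∏ i, (Polynomial.X - Polynomial.C (μ a i))) :
    (∀ i : Fin n,
        Tendsto (fun a : ℝ => μ a i.castSucc) atTop (nhds (ds i))) ∧
      Tendsto (fun a : ℝ => μ a (Fin.last n) - a) atTop (nhds 0) := by
  obtain ⟨σ, rfl⟩ := hds_perm
  obtain ⟨D, hD⟩ := (Set.finite_range d).bddAbove
  have hlow a k := castSucc_le_of_charpoly_arrowhead (hμ_eig a) (hμ_mono a) hds_mono k
  have hgap a := sum_sub_castSucc_eq_of_charpoly_arrowhead (hμ_eig a) σ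
  have hgap_le a k : d (σ k) - μ a k.castSucc ≤ μ a (Fin.last n) - a :=
    hgap a ▸ single_le_sum (fun j _ => sub_nonneg.2 (hlow a j)) (mem_univ k)
  have hup : ∀ᶠ a in atTop, μ a (Fin.last n) - a ≤ (∑ j, c j ^ 2) / (a - D) := by
    filter_upwards [eventually_gt_atTop D] with a ha
    linarith [le_add_div_of_charpoly_arrowhead (hμ_eig a) (fun i => hD ⟨i, rfl⟩) ha (Fin.last n)]
  have hbound : Tendsto (fun a => (∑ j, c j ^ 2) / (a - D)) atTop (nhds 0) :=
    tendsto_const_nhds.div_atTop (tendsto_atTop_add_const_right _ _ tendsto_id)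
  refine ⟨fun k => ?_, ?_⟩
  · refine tendsto_of_tendsto_of_tendsto_of_le_of_le'
      (by simpa using tendsto_const_nhds.sub hbound) tendsto_const_nhds ?_
      (Eventually.of_forall (hlow · k))
    filter_upwards [hup] with a ha
    linarith [hgap_le a k]
  · exact tendsto_of_tendsto_of_tendsto_of_le_of_le' tendsto_const_nhds hbound
      (Eventually.of_forall fun a => hgap a ▸ sum_nonneg fun k _ => sub_nonneg.2 (hlow a k)) hup

/-- Asymptotics of the ordered eigenvalues of the arrowhead matrix as
`a → +∞`: if `μ_1(a) ≤ ⋯ ≤ μ_{n+1}(a)` are the eigenvalues of `B(a,c,d)`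
listed with multiplicity (i.e. the characteristic polynomial factors as
`∏ (X − μ_i(a))`), and `ds` is `d` arranged in increasing order, then
`μ_i(a) → d_(i)` for `1 ≤ i ≤ n` and `μ_{n+1}(a) − a → 0`. -/
theorem arrowhead_eigenvalues_asymptotics (n : ℕ) (hn : 1 ≤ n) (c d : Fin n → ℝ)
    (ds : Fin n → ℝ) (hds_mono : Monotone ds)
    (hds_perm : ∃ σ : Equiv.Perm (Fin n), ds = d ∘ σ)
    (μ : ℝ → Fin (n + 1) → ℝ) (hμ_mono : ∀ a, Monotone (μ a))
    (hμ_eig : ∀ a, (arrowhead n a c d).charpoly =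
      ∏ i, (Polynomial.X - Polynomial.C (μ a i))) :
    (∀ i : Fin n,
        Tendsto (fun a : ℝ => μ a i.castSucc) atTop (nhds (ds i))) ∧
      Tendsto (fun a : ℝ => μ a (Fin.last n) - a) atTop (nhds 0) :=
  arrowhead_eigenvalues_asymptotics_general n c d ds hds_mono hds_perm μ hμ_mono hμ_eig
end

section
/- Let n ≥ 2, let 2 ≤ k ≤ n be an integer, and let 0 < m ≤ M. Then there exist constants 0 < C_1 ≤ C_2, depending only on n, k, m and M, with the following property. For every λ = (λ_1, …, λ_n) ∈ ℝ^n with λ_1 ≥ M and m ≤ λ_i ≤ M for all 2 ≤ i ≤ n, the partial derivatives (∂Q_k/∂λ_i)(λ) = (S_{k-1,i}^n(λ)² − S_{k,i}^n(λ) S_{k-2,i}^n(λ))/S_{k-1}^n(λ)² of Q_k = S_k^n/S_{k-1}^n satisfy: C_1/λ_1² ≤ (∂Q_k/∂λ_1)(λ) ≤ C_2/λ_1², and C_1 ≤ (∂Q_k/∂λ_p)(λ) ≤ C_2 for every 2 ≤ p ≤ n. -/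
/-- `S_{k,i}^m(λ) = S_k^{m-1}(λ̂_i)`: the elementary symmetric polynomial of
`λ` with its `i`-th entry deleted. -/
noncomputable def esymmSDel (m : ℕ) (k : ℤ) (lam : Fin m → ℝ) (i : Fin m) : ℝ :=
  if k < 0 then 0 else
    ∑ t ∈ (Finset.univ.erase i).powersetCard k.toNat, ∏ j ∈ t, lam j

/-- The partial derivative `∂Q_k/∂λ_i (λ) = (S_{k-1,i}² − S_{k,i} S_{k-2,i})/S_{k-1}²`. -/
noncomputable def dQk (n : ℕ) (k : ℕ) (lam : Fin n → ℝ) (i : Fin n) : ℝ :=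
  ((esymmSDel n ((k : ℤ) - 1) lam i) ^ 2 -
      esymmSDel n (k : ℤ) lam i * esymmSDel n ((k : ℤ) - 2) lam i) /
    (esymmS n ((k : ℤ) - 1) lam) ^ 2

/-!
The numerator of `∂Q_k/∂λ_i` is the Newton gap `S_{k-1}² - S_k S_{k-2}` of `λ̂_i`. A strengthened
Newton inequality, proved by induction on the number of variables, bounds it below by
`S_{k-1}(λ̂_i²)`, and it is at most `S_{k-1}(λ̂_i)²`. Since `λ_1` is the only large entry and a
monomial contains it at most once, both bounds are `≍ 1` for `i = 1` and `≍ λ_1²` for `i ≥ 2`,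
while the denominator `S_{k-1}(λ)²` is `≍ λ_1²`.
-/

open Finset

section Esymm

variable {α : Type*} {U : Finset α} {j : ℤ} {f : α → ℝ}

/-- Zero at negative indices like `esymmS`, so that `esymmS n j = esymmOn univ j` and
`esymmSDel n j · i = esymmOn (univ.erase i) j` are `rfl`; Newton's inequality
`esymmOn_sq_le_newtonGap` then holds for every `j : ℤ`. -/
noncomputable def esymmOn (U : Finset α) (j : ℤ) (f : α → ℝ) : ℝ :=
  if j < 0 then 0 else ∑ t ∈ U.powersetCard j.toNat, ∏ i ∈ t, f i

lemma esymmOn_of_neg (h : j < 0) : esymmOn U j f = 0 := if_pos h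

lemma esymmOn_natCast (U : Finset α) (j : ℕ) (f : α → ℝ) :
    esymmOn U j f = ∑ t ∈ U.powersetCard j, ∏ i ∈ t, f i := by
  simp [esymmOn]

lemma esymmOn_zero (U : Finset α) (f : α → ℝ) : esymmOn U 0 f = 1 := by
  simpa using esymmOn_natCast U 0 f

lemma esymmOn_of_card_lt (h : (#U : ℤ) < j) : esymmOn U j f = 0 := by
  lift j to ℕ using by omega
  rw [esymmOn_natCast, powersetCard_eq_empty.2 (by omega), sum_empty]

lemma esymmOn_nonneg (hf : ∀ i ∈ U, 0 ≤ f i) : 0 ≤ esymmOn U j f := by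
  unfold esymmOn
  split_ifs
  · exact le_rfl
  · exact sum_nonneg fun t ht ↦ prod_nonneg fun i hi ↦ hf i ((mem_powersetCard.1 ht).1 hi)

lemma esymmOn_pos (hf : ∀ i ∈ U, 0 < f i) (h₀ : 0 ≤ j) (hj : j ≤ #U) :
    0 < esymmOn U j f := by
  lift j to ℕ using h₀
  rw [esymmOn_natCast]
  exact sum_pos (fun t ht ↦ prod_pos fun i hi ↦ hf i ((mem_powersetCard.1 ht).1 hi))
    (powersetCard_nonempty.2 (by omega))

lemma esymmOn_insert [DecidableEq α] {x : α} (hx : x ∉ U) (j : ℤ) (f : α → ℝ) :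
    esymmOn (insert x U) j f = esymmOn U j f + f x * esymmOn U (j - 1) f := by
  rcases lt_trichotomy j 0 with hj | rfl | hj
  · simp [esymmOn_of_neg hj, esymmOn_of_neg (show j - 1 < 0 by omega)]
  · simp [esymmOn_zero, esymmOn_of_neg (show (-1 : ℤ) < 0 by omega)]
  lift j to ℕ using hj.le
  obtain ⟨d, rfl⟩ : ∃ d, j = d + 1 := ⟨j - 1, by omega⟩
  have hxt : ∀ t ∈ U.powersetCard d, x ∉ t := fun t ht hxt ↦ hx ((mem_powersetCard.1 ht).1 hxt)
  push_cast
  rw [add_sub_cancel_right, ← Nat.cast_succ, esymmOn_natCast, esymmOn_natCast, esymmOn_natCast,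
    powersetCard_succ_insert hx, sum_union, sum_image, mul_sum]
  · exact congrArg _ (sum_congr rfl fun t ht ↦ prod_insert (hxt t ht))
  · intro s hs t ht hst
    simpa [erase_insert (hxt s hs), erase_insert (hxt t ht)] using congrArg (erase · x) hst
  · refine disjoint_left.2 fun t ht ht' ↦ ?_
    obtain ⟨s, -, rfl⟩ := mem_image.1 ht'
    exact hx ((mem_powersetCard.1 ht).1 (mem_insert_self x s))

lemma esymmOn_insert_succ [DecidableEq α] {x : α} (hx : x ∉ U) (j : ℕ) (f : α → ℝ) :
    esymmOn (insert x U) ↑(j + 1) f = esymmOn U ↑(j + 1) f + f x * esymmOn U j f := by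
  rw [esymmOn_insert hx, Nat.cast_succ, add_sub_cancel_right]

noncomputable def newtonGap (U : Finset α) (j : ℤ) (f : α → ℝ) : ℝ :=
  esymmOn U j f ^ 2 - esymmOn U (j + 1) f * esymmOn U (j - 1) f

lemma newtonGap_sub_one (U : Finset α) (j : ℤ) (f : α → ℝ) :
    newtonGap U (j - 1) f = esymmOn U (j - 1) f ^ 2 - esymmOn U j f * esymmOn U (j - 2) f := by
  rw [newtonGap, sub_add_cancel, sub_sub, one_add_one_eq_two]

lemma newtonGap_insert [DecidableEq α] {x : α} (hx : x ∉ U) (j : ℤ) (f : α → ℝ) :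
    newtonGap (insert x U) j f = newtonGap U j f
      + f x * (esymmOn U j f * esymmOn U (j - 1) f - esymmOn U (j + 1) f * esymmOn U (j - 2) f)
      + f x ^ 2 * newtonGap U (j - 1) f := by
  rw [newtonGap_sub_one]
  unfold newtonGap
  rw [esymmOn_insert hx, esymmOn_insert hx, esymmOn_insert hx, add_sub_cancel_right, sub_sub,
    one_add_one_eq_two]
  ring

lemma newtonGap_le_sq (hf : ∀ i ∈ U, 0 ≤ f i) : newtonGap U j f ≤ esymmOn U j f ^ 2 :=
  sub_le_self _ (mul_nonneg (esymmOn_nonneg hf) (esymmOn_nonneg hf))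

lemma esymmOn_mul_le_of_newtonGap_nonneg (hf : ∀ i ∈ U, 0 < f i)
    (hN : ∀ j, 0 ≤ newtonGap U j f) (j : ℤ) :
    esymmOn U (j + 1) f * esymmOn U (j - 2) f ≤ esymmOn U j f * esymmOn U (j - 1) f := by
  have hf₀ : ∀ i ∈ U, 0 ≤ f i := fun i hi ↦ (hf i hi).le
  by_cases hj : 1 ≤ j ∧ j ≤ #U
  · have hpos := mul_pos (esymmOn_pos hf (by omega) hj.2)
      (esymmOn_pos (j := j - 1) hf (by omega) (by omega))
    have h₁ := hN j
    have h₂ := hN (j - 1)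
    rw [newtonGap, sub_nonneg] at h₁
    rw [newtonGap_sub_one, sub_nonneg] at h₂
    refine le_of_mul_le_mul_right ?_ hpos
    calc _ = esymmOn U (j + 1) f * esymmOn U (j - 1) f * (esymmOn U j f * esymmOn U (j - 2) f) :=
          by ring
      _ ≤ esymmOn U j f ^ 2 * esymmOn U (j - 1) f ^ 2 :=
          mul_le_mul h₁ h₂ (mul_nonneg (esymmOn_nonneg hf₀) (esymmOn_nonneg hf₀)) (sq_nonneg _)
      _ = _ := by ring
  · -- outside `1 ≤ j ≤ #U` one factor on the left vanishes
    have hRHS := mul_nonneg (esymmOn_nonneg (j := j) hf₀) (esymmOn_nonneg (j := j - 1) hf₀)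
    rcases not_and_or.1 hj with hj | hj
    · rwa [esymmOn_of_neg (show j - 2 < 0 by omega), mul_zero]
    · rwa [esymmOn_of_card_lt (show (#U : ℤ) < j + 1 by omega), zero_mul]

theorem esymmOn_sq_le_newtonGap (hf : ∀ i ∈ U, 0 < f i) (j : ℤ) :
    esymmOn U j (fun i ↦ f i ^ 2) ≤ newtonGap U j f := by
  classical
  induction U using Finset.induction_on generalizing j with
  | empty =>
    have hE : ∀ {g : α → ℝ} {i : ℤ}, 0 < i → esymmOn ∅ i g = 0 :=
      fun hi ↦ esymmOn_of_card_lt (by simpa using hi)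
    rcases lt_trichotomy j 0 with hj | rfl | hj
    · simp [newtonGap, esymmOn_of_neg hj, esymmOn_of_neg (show j - 1 < 0 by omega)]
    · simp [newtonGap, esymmOn_zero, esymmOn_of_neg (show (-1 : ℤ) < 0 by omega)]
    · simp [newtonGap, hE hj, hE (show 0 < j + 1 by omega)]
  | insert x U hx IH =>
    have hfU : ∀ i ∈ U, 0 < f i := fun i hi ↦ hf i (mem_insert_of_mem hi)
    have hfx : 0 < f x := hf x (mem_insert_self x U)
    have IH := fun j ↦ IH hfU j
    have cross := esymmOn_mul_le_of_newtonGap_nonneg hfU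
      (fun j ↦ (esymmOn_nonneg fun i _ ↦ sq_nonneg (f i)).trans (IH j)) j
    rw [esymmOn_insert hx, newtonGap_insert hx]
    have hsq := mul_le_mul_of_nonneg_left (IH (j - 1)) (sq_nonneg (f x))
    have hcross := mul_nonneg hfx.le (sub_nonneg.2 cross)
    linarith [IH j]

lemma esymmOn_le_choose_mul_pow {M : ℝ} {N : ℕ} (hf₀ : ∀ i ∈ U, 0 ≤ f i)
    (hfM : ∀ i ∈ U, f i ≤ M) (hM : 0 ≤ M) (hU : #U ≤ N) (j : ℕ) :
    esymmOn U j f ≤ N.choose j * M ^ j := by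
  rw [esymmOn_natCast]
  calc ∑ t ∈ U.powersetCard j, ∏ i ∈ t, f i ≤ ∑ t ∈ U.powersetCard j, M ^ j := by
        refine sum_le_sum fun t ht ↦ ?_
        obtain ⟨htU, rfl⟩ := mem_powersetCard.1 ht
        calc ∏ i ∈ t, f i ≤ ∏ _i ∈ t, M :=
              prod_le_prod (fun i hi ↦ hf₀ i (htU hi)) fun i hi ↦ hfM i (htU hi)
          _ = M ^ #t := prod_const M
    _ = (#U).choose j * M ^ j := by rw [sum_const, card_powersetCard, nsmul_eq_mul]
    _ ≤ N.choose j * M ^ j := by gcongr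

lemma pow_le_esymmOn {m : ℝ} (hm : 0 ≤ m) (hf : ∀ i ∈ U, m ≤ f i) {j : ℕ} (hj : j ≤ #U) :
    m ^ j ≤ esymmOn U j f := by
  obtain ⟨I, hIU, rfl⟩ := exists_subset_card_eq hj
  rw [esymmOn_natCast]
  calc m ^ #I = ∏ _i ∈ I, m := (prod_const m).symm
    _ ≤ ∏ i ∈ I, f i := prod_le_prod (fun _ _ ↦ hm) fun i hi ↦ hf i (hIU hi)
    _ ≤ ∑ t ∈ U.powersetCard #I, ∏ i ∈ t, f i :=
        single_le_sum (f := fun t ↦ ∏ i ∈ t, f i)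
          (fun t ht ↦ prod_nonneg fun i hi ↦ hm.trans (hf i ((mem_powersetCard.1 ht).1 hi)))
          (mem_powersetCard.2 ⟨hIU, rfl⟩)

lemma esymmOn_insert_le [DecidableEq α] {x : α} {M : ℝ} {N : ℕ} (hx : x ∉ U)
    (hf₀ : ∀ i ∈ U, 0 ≤ f i) (hfM : ∀ i ∈ U, f i ≤ M) (hM : 0 ≤ M) (hMx : M ≤ f x)
    (hU : #U + 1 ≤ N) (j : ℕ) :
    esymmOn (insert x U) ↑(j + 1) f ≤ f x * (N.choose (j + 1) * M ^ j) := by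
  have hx₀ : 0 ≤ f x := hM.trans hMx
  rw [esymmOn_insert_succ hx]
  calc esymmOn U ↑(j + 1) f + f x * esymmOn U j f
      ≤ (#U).choose (j + 1) * M ^ (j + 1) + f x * ((#U).choose j * M ^ j) := by
        gcongr
        exacts [esymmOn_le_choose_mul_pow hf₀ hfM hM le_rfl _,
          esymmOn_le_choose_mul_pow hf₀ hfM hM le_rfl _]
    _ ≤ (#U).choose (j + 1) * (f x * M ^ j) + f x * ((#U).choose j * M ^ j) := by
        rw [pow_succ']
        gcongr
    _ = f x * ((#U + 1).choose (j + 1) * M ^ j) := by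
        rw [Nat.choose_succ_succ']
        push_cast
        ring
    _ ≤ f x * (N.choose (j + 1) * M ^ j) := by gcongr

lemma mul_pow_le_esymmOn_insert [DecidableEq α] {x : α} {m : ℝ} (hx : x ∉ U) (hm : 0 ≤ m)
    (hf : ∀ i ∈ U, m ≤ f i) (hx₀ : 0 ≤ f x) {j : ℕ} (hj : j ≤ #U) :
    f x * m ^ j ≤ esymmOn (insert x U) ↑(j + 1) f := by
  rw [esymmOn_insert_succ hx]
  have := esymmOn_nonneg (j := ↑(j + 1)) fun i hi ↦ hm.trans (hf i hi)
  nlinarith [pow_le_esymmOn hm hf hj]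

end Esymm

lemma div_sq_bounds {D S d₁ d₂ s₁ s₂ : ℝ} (hs₁ : 0 < s₁)
    (hD : d₁ ^ 2 ≤ D ∧ D ≤ d₂ ^ 2) (hS : s₁ ≤ S ∧ S ≤ s₂) :
    (d₁ / s₂) ^ 2 ≤ D / S ^ 2 ∧ D / S ^ 2 ≤ (d₂ / s₁) ^ 2 := by
  have hS₀ : 0 < S := hs₁.trans_le hS.1
  rw [div_pow, div_pow]
  exact ⟨div_le_div₀ ((sq_nonneg d₁).trans hD.1) hD.1 (by positivity)
      (pow_le_pow_left₀ hS₀.le hS.2 2),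
    div_le_div₀ (sq_nonneg d₂) hD.2 (by positivity) (pow_le_pow_left₀ hs₁.le hS.1 2)⟩

lemma dQk_eq_newtonGap (n a : ℕ) (lam : Fin n → ℝ) (i : Fin n) :
    dQk n (a + 2) lam i =
      newtonGap (univ.erase i) ↑(a + 1) lam / esymmOn univ ↑(a + 1) lam ^ 2 := by
  have h₀ : ((a + 2 : ℕ) : ℤ) = ↑(a + 1) + 1 := by push_cast; ring
  have h₁ : ((a + 2 : ℕ) : ℤ) - 1 = ↑(a + 1) := by push_cast; ring
  have h₂ : ((a + 2 : ℕ) : ℤ) - 2 = ↑(a + 1) - 1 := by push_cast; ring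
  rw [dQk, h₁, h₂, h₀]
  rfl

namespace FlatSide

variable {n a : ℕ} {m M : ℝ} {lam : Fin n → ℝ} {i₀ : Fin n}

lemma lam_pos (hm : 0 < m) (hM : 0 < M) (hΛ : M ≤ lam i₀)
    (hbd : ∀ i, i ≠ i₀ → m ≤ lam i ∧ lam i ≤ M) (i : Fin n) : 0 < lam i := by
  by_cases hi : i = i₀
  · exact hi ▸ hM.trans_le hΛ
  · exact hm.trans_le (hbd i hi).1

lemma esymmOn_univ_bounds (hm : 0 ≤ m) (hM : 0 ≤ M) (hΛ : M ≤ lam i₀)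
    (hbd : ∀ i, i ≠ i₀ → m ≤ lam i ∧ lam i ≤ M) (ha : a + 2 ≤ n) :
    lam i₀ * m ^ a ≤ esymmOn univ ↑(a + 1) lam ∧
      esymmOn univ ↑(a + 1) lam ≤ lam i₀ * (n.choose (a + 1) * M ^ a) := by
  have hU : #(univ.erase i₀) = n - 1 := by simp
  rw [← insert_erase (mem_univ i₀)]
  exact ⟨mul_pow_le_esymmOn_insert (notMem_erase i₀ univ) hm
      (fun i hi ↦ (hbd i (ne_of_mem_erase hi)).1) (hM.trans hΛ) (by omega),
    esymmOn_insert_le (notMem_erase i₀ univ)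
      (fun i hi ↦ hm.trans (hbd i (ne_of_mem_erase hi)).1)
      (fun i hi ↦ (hbd i (ne_of_mem_erase hi)).2) hM hΛ (by omega) a⟩

lemma newtonGap_erase_self_bounds (hm : 0 < m) (hM : 0 ≤ M)
    (hbd : ∀ i, i ≠ i₀ → m ≤ lam i ∧ lam i ≤ M) (ha : a + 2 ≤ n) :
    (m ^ (a + 1)) ^ 2 ≤ newtonGap (univ.erase i₀) ↑(a + 1) lam ∧
      newtonGap (univ.erase i₀) ↑(a + 1) lam ≤ ((n - 1).choose (a + 1) * M ^ (a + 1)) ^ 2 := by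
  have hU : #(univ.erase i₀) = n - 1 := by simp
  have hlo : ∀ i ∈ univ.erase i₀, m ≤ lam i := fun i hi ↦ (hbd i (ne_of_mem_erase hi)).1
  have hpos : ∀ i ∈ univ.erase i₀, 0 < lam i := fun i hi ↦ hm.trans_le (hlo i hi)
  have hnonneg : ∀ i ∈ univ.erase i₀, 0 ≤ lam i := fun i hi ↦ (hpos i hi).le
  constructor
  · calc (m ^ (a + 1)) ^ 2 = (m ^ 2) ^ (a + 1) := by ring
      _ ≤ esymmOn (univ.erase i₀) ↑(a + 1) (fun i ↦ lam i ^ 2) :=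
          pow_le_esymmOn (sq_nonneg m) (fun i hi ↦ pow_le_pow_left₀ hm.le (hlo i hi) 2)
            (by omega)
      _ ≤ _ := esymmOn_sq_le_newtonGap hpos _
  · refine (newtonGap_le_sq hnonneg).trans (pow_le_pow_left₀ (esymmOn_nonneg hnonneg) ?_ 2)
    exact esymmOn_le_choose_mul_pow hnonneg (fun i hi ↦ (hbd i (ne_of_mem_erase hi)).2) hM
      hU.le _

lemma newtonGap_erase_bounds_of_ne (hm : 0 < m) (hM : 0 < M) (hΛ : M ≤ lam i₀)
    (hbd : ∀ i, i ≠ i₀ → m ≤ lam i ∧ lam i ≤ M) (ha : a + 2 ≤ n) {p : Fin n} (hp : p ≠ i₀) :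
    (lam i₀ * m ^ a) ^ 2 ≤ newtonGap (univ.erase p) ↑(a + 1) lam ∧
      newtonGap (univ.erase p) ↑(a + 1) lam ≤ (lam i₀ * (n.choose (a + 1) * M ^ a)) ^ 2 := by
  have hpos := lam_pos hm hM hΛ hbd
  have hi₀ : i₀ ∈ univ.erase p := mem_erase.2 ⟨hp.symm, mem_univ _⟩
  have hV : #((univ.erase p).erase i₀) = n - 2 := by
    rw [card_erase_of_mem hi₀, card_erase_of_mem (mem_univ p), card_univ, Fintype.card_fin]
    omega
  have hVbd : ∀ i ∈ (univ.erase p).erase i₀, m ≤ lam i ∧ lam i ≤ M :=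
    fun i hi ↦ hbd i (ne_of_mem_erase hi)
  have hnonneg : ∀ i ∈ univ.erase p, 0 ≤ lam i := fun i _ ↦ (hpos i).le
  rw [← insert_erase hi₀] at hnonneg ⊢
  constructor
  · calc (lam i₀ * m ^ a) ^ 2 = lam i₀ ^ 2 * (m ^ 2) ^ a := by ring
      _ ≤ esymmOn (insert i₀ ((univ.erase p).erase i₀)) ↑(a + 1) (fun i ↦ lam i ^ 2) :=
          mul_pow_le_esymmOn_insert (f := fun i ↦ lam i ^ 2) (notMem_erase _ _) (sq_nonneg m)
            (fun i hi ↦ pow_le_pow_left₀ hm.le (hVbd i hi).1 2) (sq_nonneg _) (by omega)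
      _ ≤ _ := esymmOn_sq_le_newtonGap (fun i _ ↦ hpos i) _
  · refine (newtonGap_le_sq hnonneg).trans (pow_le_pow_left₀ (esymmOn_nonneg hnonneg) ?_ 2)
    exact esymmOn_insert_le (notMem_erase _ _) (fun i _ ↦ (hpos i).le)
      (fun i hi ↦ (hVbd i hi).2) hM.le hΛ (by omega) a

lemma dQk_self_bounds (hm : 0 < m) (hM : 0 < M) (hΛ : M ≤ lam i₀)
    (hbd : ∀ i, i ≠ i₀ → m ≤ lam i ∧ lam i ≤ M) (ha : a + 2 ≤ n) :
    (m ^ (a + 1) / (n.choose (a + 1) * M ^ a)) ^ 2 / lam i₀ ^ 2 ≤ dQk n (a + 2) lam i₀ ∧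
      dQk n (a + 2) lam i₀ ≤ ((n - 1).choose (a + 1) * M ^ (a + 1) / m ^ a) ^ 2 / lam i₀ ^ 2 := by
  have hΛ₀ : 0 < lam i₀ := hM.trans_le hΛ
  have h := div_sq_bounds (mul_pos hΛ₀ (pow_pos hm a))
    (newtonGap_erase_self_bounds hm hM.le hbd ha) (esymmOn_univ_bounds hm.le hM.le hΛ hbd ha)
  rwa [← dQk_eq_newtonGap, div_mul_eq_div_div_swap _ (lam i₀), div_mul_eq_div_div_swap _ (lam i₀),
    div_pow _ (lam i₀), div_pow _ (lam i₀)] at h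

lemma dQk_bounds_of_ne (hm : 0 < m) (hM : 0 < M) (hΛ : M ≤ lam i₀)
    (hbd : ∀ i, i ≠ i₀ → m ≤ lam i ∧ lam i ≤ M) (ha : a + 2 ≤ n) {p : Fin n} (hp : p ≠ i₀) :
    (m ^ a / (n.choose (a + 1) * M ^ a)) ^ 2 ≤ dQk n (a + 2) lam p ∧
      dQk n (a + 2) lam p ≤ (n.choose (a + 1) * M ^ a / m ^ a) ^ 2 := by
  have hΛ₀ : 0 < lam i₀ := hM.trans_le hΛ
  have h := div_sq_bounds (mul_pos hΛ₀ (pow_pos hm a))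
    (newtonGap_erase_bounds_of_ne hm hM hΛ hbd ha hp) (esymmOn_univ_bounds hm.le hM.le hΛ hbd ha)
  rwa [← dQk_eq_newtonGap, mul_div_mul_left _ _ hΛ₀.ne', mul_div_mul_left _ _ hΛ₀.ne'] at h

end FlatSide

lemma div_sq_le_div_sq_of_le {c K : ℝ} (hc : 0 < c) (hcK : c ≤ K) : (c / K) ^ 2 ≤ (K / c) ^ 2 :=
  (pow_le_one₀ (div_nonneg hc.le (hc.le.trans hcK)) ((div_le_one (hc.trans_le hcK)).2 hcK)).trans
    (one_le_pow₀ ((one_le_div hc).2 hcK))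

theorem dQk_degeneration_rate_general (n k : ℕ) (hk2 : 2 ≤ k) (hkn : k ≤ n)
    (m M : ℝ) (hm : 0 < m) (hmM : m ≤ M) :
    ∃ C₁ C₂ : ℝ, 0 < C₁ ∧ C₁ ≤ C₂ ∧
      ∀ lam : Fin n → ℝ, ∀ i₀ : Fin n, (i₀ : ℕ) = 0 →
        M ≤ lam i₀ →
        (∀ i : Fin n, i ≠ i₀ → m ≤ lam i ∧ lam i ≤ M) →
        (C₁ / (lam i₀) ^ 2 ≤ dQk n k lam i₀ ∧ dQk n k lam i₀ ≤ C₂ / (lam i₀) ^ 2) ∧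
          ∀ p : Fin n, p ≠ i₀ → C₁ ≤ dQk n k lam p ∧ dQk n k lam p ≤ C₂ := by
  obtain ⟨a, rfl⟩ : ∃ a, k = a + 2 := ⟨k - 2, by omega⟩
  have hM : 0 < M := hm.trans_le hmM
  have hchoose : (1 : ℝ) ≤ n.choose (a + 1) := by exact_mod_cast Nat.choose_pos (by omega)
  have hcK : m ^ a ≤ n.choose (a + 1) * M ^ a :=
    (pow_le_pow_left₀ hm.le hmM a).trans (le_mul_of_one_le_left (by positivity) hchoose)
  set c := m ^ a
  set K := (n.choose (a + 1) : ℝ) * M ^ a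
  set B := ((n - 1).choose (a + 1) : ℝ) * M ^ (a + 1)
  refine ⟨min ((m ^ (a + 1) / K) ^ 2) ((c / K) ^ 2), max ((B / c) ^ 2) ((K / c) ^ 2),
    by positivity, (min_le_right _ _).trans ((div_sq_le_div_sq_of_le (by positivity) hcK).trans
      (le_max_right _ _)), fun lam i₀ _ hΛ hbd ↦ ⟨?_, fun p hp ↦ ?_⟩⟩
  · obtain ⟨h₁, h₂⟩ := FlatSide.dQk_self_bounds hm hM hΛ hbd hkn
    exact ⟨le_trans (by gcongr; exact min_le_left _ _) h₁,
      h₂.trans (by gcongr; exact le_max_left _ _)⟩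
  · obtain ⟨h₁, h₂⟩ := FlatSide.dQk_bounds_of_ne hm hM hΛ hbd hkn hp
    exact ⟨(min_le_right _ _).trans h₁, h₂.trans (le_max_right _ _)⟩

/-- Estimate (5.16): when `λ_1 ≥ M` blows up and `m ≤ λ_i ≤ M` for `i ≥ 2`,
the linearized coefficients satisfy `C₁/λ_1² ≤ ∂Q_k/∂λ_1 ≤ C₂/λ_1²` and
`C₁ ≤ ∂Q_k/∂λ_p ≤ C₂` for `p ≥ 2`, with `C₁, C₂` depending only on `n, k, m, M`. -/
theorem dQk_degeneration_rate (n k : ℕ) (hn : 2 ≤ n) (hk2 : 2 ≤ k) (hkn : k ≤ n)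
    (m M : ℝ) (hm : 0 < m) (hmM : m ≤ M) :
    ∃ C₁ C₂ : ℝ, 0 < C₁ ∧ C₁ ≤ C₂ ∧
      ∀ lam : Fin n → ℝ, ∀ i₀ : Fin n, (i₀ : ℕ) = 0 →
        M ≤ lam i₀ →
        (∀ i : Fin n, i ≠ i₀ → m ≤ lam i ∧ lam i ≤ M) →
        (C₁ / (lam i₀) ^ 2 ≤ dQk n k lam i₀ ∧ dQk n k lam i₀ ≤ C₂ / (lam i₀) ^ 2) ∧
          ∀ p : Fin n, p ≠ i₀ → C₁ ≤ dQk n k lam p ∧ dQk n k lam p ≤ C₂ :=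
  dQk_degeneration_rate_general n k hk2 hkn m M hm hmM
end
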